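/- Let 0 < T ≤ ∞ and φ : [0, T] → ℂ be integrable with φ(t) = t^σ h(t), where Re σ > -1, h(0) ≠ 0, and h is differentiable with bounded derivative near 0. Then Φ(λ) = ∫_0^T φ(t) e^{-λt} dt is finite for Re λ > 0 and Φ(λ) = h(0) Γ(σ+1) λ^{-σ-1} + O(λ^{-σ-2}) as λ → ∞ in the sector |arg λ| ≤ θ, for any fixed 0 ≤ θ < π/2. -/

import Mathlib

/-!
Split the integral at a small `δ > 0` and write `φ t = t ^ σ * h 0 + t ^ σ * (h t - h 0)` on
`(0, δ]`. Extending the first piece to `(0, ∞)` produces exactly `h 0 * Γ(σ + 1) * λ ^ (-σ - 1)`,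
at the cost of a tail over `(δ, ∞)`; since `‖h t - h 0‖ ≤ M t`, the second piece is at most
`M ∫ t ^ (Re σ + 1) e ^ (-t Re λ) dt = O((Re λ) ^ (-Re σ - 2))`. The two pieces living on
`t > δ` are `O(e ^ (-δ Re λ))`. Finally `Re λ ≥ cos θ ‖λ‖` in the sector, and
`‖λ ^ (-σ - 2)‖` is comparable to `‖λ‖ ^ (-Re σ - 2)` there.
-/

open MeasureTheory Complex Filter Asymptotics Set Topology

lemma norm_mul_cexp_neg_mul (a z : ℂ) (t : ℝ) :
    ‖a * cexp (-z * t)‖ = ‖a‖ * Real.exp (-z.re * t) := by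
  rw [norm_mul, Complex.norm_exp]
  simp

lemma norm_cpow_mul_cexp_neg_mul {t : ℝ} (ht : 0 < t) (σ z : ℂ) :
    ‖(t : ℂ) ^ σ * cexp (-z * t)‖ = t ^ σ.re * Real.exp (-z.re * t) := by
  rw [norm_mul_cexp_neg_mul, norm_cpow_eq_rpow_re_of_pos ht]

lemma integrableOn_rpow_mul_exp_neg_mul_Ioi {s x : ℝ} (hs : -1 < s) (hx : 0 < x) :
    IntegrableOn (fun t : ℝ => t ^ s * Real.exp (-x * t)) (Ioi 0) := by
  simpa using integrableOn_rpow_mul_exp_neg_mul_rpow hs one_pos hx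

lemma integral_rpow_mul_exp_neg_mul_Ioi' {s x : ℝ} (hs : -1 < s) (hx : 0 < x) :
    ∫ t in Ioi (0 : ℝ), t ^ s * Real.exp (-x * t) = Real.Gamma (s + 1) * x ^ (-(s + 1)) := by
  have := Real.integral_rpow_mul_exp_neg_mul_Ioi (a := s + 1) (by linarith) hx
  simp only [add_sub_cancel_right, ← neg_mul] at this
  rw [this, one_div, Real.inv_rpow hx.le, Real.rpow_neg hx.le, mul_comm]

lemma aestronglyMeasurable_cpow_mul_cexp_neg_mul (σ z : ℂ) (μ : Measure ℝ) :
    AEStronglyMeasurable (fun t : ℝ => (t : ℂ) ^ σ * cexp (-z * t)) μ :=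
  ((measurable_ofReal.pow_const σ).mul (by fun_prop)).aestronglyMeasurable

lemma integrableOn_cpow_mul_cexp_neg_mul_Ioi {σ z : ℂ} (hσ : -1 < σ.re) (hz : 0 < z.re) :
    IntegrableOn (fun t : ℝ => (t : ℂ) ^ σ * cexp (-z * t)) (Ioi 0) :=
  (integrableOn_rpow_mul_exp_neg_mul_Ioi hσ hz).mono'
    (aestronglyMeasurable_cpow_mul_cexp_neg_mul σ z _)
    (ae_restrict_of_forall_mem measurableSet_Ioi fun _ ht =>
      (norm_cpow_mul_cexp_neg_mul ht σ z).le)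

lemma differentiableOn_integral_cpow_mul_cexp_neg_mul {σ : ℂ} (hσ : -1 < σ.re) :
    DifferentiableOn ℂ (fun z : ℂ => ∫ t in Ioi (0 : ℝ), (t : ℂ) ^ σ * cexp (-z * t))
      {z | 0 < z.re} := by
  intro z₀ (hz₀ : 0 < z₀.re)
  have hε : 0 < z₀.re / 2 := half_pos hz₀
  have hbound : ∀ᵐ (t : ℝ) ∂volume.restrict (Ioi 0), ∀ z ∈ Metric.ball z₀ (z₀.re / 2),
      ‖-((t : ℂ) ^ (σ + 1) * cexp (-z * t))‖ ≤ t ^ (σ.re + 1) * Real.exp (-(z₀.re / 2) * t) := by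
    refine ae_restrict_of_forall_mem measurableSet_Ioi fun t (ht : 0 < t) z hz => ?_
    have hre : z₀.re / 2 ≤ z.re := by
      have := (abs_re_le_norm (z - z₀)).trans (mem_ball_iff_norm.1 hz).le
      rw [sub_re] at this
      linarith [neg_abs_le (z.re - z₀.re)]
    rw [norm_neg, norm_cpow_mul_cexp_neg_mul ht, add_re, one_re]
    gcongr
  have hderiv : ∀ᵐ (t : ℝ) ∂volume.restrict (Ioi 0), ∀ z ∈ Metric.ball z₀ (z₀.re / 2),
      HasDerivAt (fun z : ℂ => (t : ℂ) ^ σ * cexp (-z * t))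
        (-((t : ℂ) ^ (σ + 1) * cexp (-z * t))) z := by
    refine ae_restrict_of_forall_mem measurableSet_Ioi fun t (ht : 0 < t) z _ => ?_
    refine ((((hasDerivAt_id z).neg.mul_const (t : ℂ)).cexp).const_mul
      ((t : ℂ) ^ σ)).congr_deriv ?_
    rw [cpow_add _ _ (ofReal_ne_zero.2 ht.ne'), cpow_one, Pi.neg_apply, id]
    ring
  exact (hasDerivAt_integral_of_dominated_loc_of_deriv_le
    (F' := fun z t => -((t : ℂ) ^ (σ + 1) * cexp (-z * t))) (Metric.ball_mem_nhds z₀ hε)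
    (.of_forall fun z => aestronglyMeasurable_cpow_mul_cexp_neg_mul σ z _)
    (integrableOn_cpow_mul_cexp_neg_mul_Ioi hσ hz₀)
    (aestronglyMeasurable_cpow_mul_cexp_neg_mul (σ + 1) z₀ _).neg hbound
    (integrableOn_rpow_mul_exp_neg_mul_Ioi (by linarith) hε)
    hderiv).2.differentiableAt.differentiableWithinAt

-- Analytic continuation in `z` of the real case `Complex.integral_cpow_mul_exp_neg_mul_Ioi`.
theorem integral_cpow_mul_cexp_neg_mul_Ioi {σ z : ℂ} (hσ : -1 < σ.re) (hz : 0 < z.re) :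
    ∫ t in Ioi (0 : ℝ), (t : ℂ) ^ σ * cexp (-z * t) = Gamma (σ + 1) * z ^ (-σ - 1) := by
  have hU : IsOpen {z : ℂ | 0 < z.re} := isOpen_lt continuous_const continuous_re
  have hpow : DifferentiableOn ℂ (fun z : ℂ => Gamma (σ + 1) * z ^ (-σ - 1)) {z | 0 < z.re} :=
    fun z hz => ((differentiableAt_id.cpow_const (Or.inl hz)).const_mul _).differentiableWithinAt
  have hreal : ∀ x : ℝ, 0 < x → ∫ t in Ioi (0 : ℝ), (t : ℂ) ^ σ * cexp (-(x : ℂ) * t)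
      = Gamma (σ + 1) * (x : ℂ) ^ (-σ - 1) := fun x hx => by
    have := integral_cpow_mul_exp_neg_mul_Ioi (a := σ + 1)
      (by simp only [add_re, one_re]; linarith) hx
    simp only [add_sub_cancel_right, ← neg_mul] at this
    rw [this, one_div, inv_cpow _ _ (by simp [arg_ofReal_of_nonneg hx.le, Real.pi_ne_zero.symm]),
      ← cpow_neg, neg_add', mul_comm]
  have hfreq : ∃ᶠ w in 𝓝[≠] (1 : ℂ), ∫ t in Ioi (0 : ℝ), (t : ℂ) ^ σ * cexp (-w * t)
      = Gamma (σ + 1) * w ^ (-σ - 1) := by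
    have hofReal : Tendsto ((↑) : ℝ → ℂ) (𝓝[≠] 1) (𝓝[≠] 1) := by
      refine tendsto_nhdsWithin_iff.2 ⟨?_, eventually_mem_nhdsWithin.mono fun x hx => ?_⟩
      · exact ofReal_one ▸ (continuous_ofReal.tendsto 1).mono_left nhdsWithin_le_nhds
      · exact fun h => hx (ofReal_eq_one.1 h)
    refine hofReal.frequently (Eventually.frequently ?_)
    filter_upwards [nhdsWithin_le_nhds (eventually_gt_nhds one_pos)] with x hx using hreal x hx
  exact ((differentiableOn_integral_cpow_mul_cexp_neg_mul hσ).analyticOnNhd hU)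
    |>.eqOn_of_preconnected_of_frequently_eq (hpow.analyticOnNhd hU)
      (convex_halfSpace_re_gt 0).isPreconnected (by simp) hfreq hz

theorem MeasureTheory.IntegrableOn.mul_cexp_neg_mul {φ : ℝ → ℂ} {S : Set ℝ}
    (hφ : IntegrableOn φ S) (hS : MeasurableSet S) (hS0 : S ⊆ Ici 0) {z : ℂ} (hz : 0 ≤ z.re) :
    IntegrableOn (fun t => φ t * cexp (-z * t)) S :=
  hφ.mul_bdd (by fun_prop : Continuous fun t : ℝ => cexp (-z * t)).aestronglyMeasurable
    (ae_restrict_of_forall_mem hS fun t ht => by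
      rw [Complex.norm_exp, Real.exp_le_one_iff]
      simpa using mul_nonneg hz (hS0 ht))

theorem isBigO_integral_Ioc_mul_cexp_neg_mul {g : ℝ → ℂ} {p M δ : ℝ} (hp : -1 < p)
    (hg : ∀ t ∈ Ioc 0 δ, ‖g t‖ ≤ M * t ^ p) :
    (fun z : ℂ => ∫ t in Ioc 0 δ, g t * cexp (-z * t)) =O[comap re atTop]
      fun z => z.re ^ (-(p + 1)) := by
  refine .of_bound (|M| * Real.Gamma (p + 1)) ?_
  filter_upwards [tendsto_comap.eventually (eventually_gt_atTop 0)] with z (hz : 0 < z.re)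
  have hint : IntegrableOn (fun t => |M| * (t ^ p * Real.exp (-z.re * t))) (Ioi 0) :=
    (integrableOn_rpow_mul_exp_neg_mul_Ioi hp hz).const_mul |M|
  calc ‖∫ t in Ioc 0 δ, g t * cexp (-z * t)‖
      ≤ ∫ t in Ioc 0 δ, |M| * (t ^ p * Real.exp (-z.re * t)) := by
        refine norm_integral_le_of_norm_le (hint.mono_set Ioc_subset_Ioi_self)
          (ae_restrict_of_forall_mem measurableSet_Ioc fun t ht => ?_)
        rw [norm_mul_cexp_neg_mul, ← mul_assoc]
        gcongr
        exact (hg t ht).trans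
          (mul_le_mul_of_nonneg_right (le_abs_self M) (Real.rpow_nonneg ht.1.le p))
    _ ≤ ∫ t in Ioi 0, |M| * (t ^ p * Real.exp (-z.re * t)) :=
        setIntegral_mono_set hint
          (ae_restrict_of_forall_mem measurableSet_Ioi fun t (ht : 0 < t) => by positivity)
          Ioc_subset_Ioi_self.eventuallyLE
    _ = |M| * Real.Gamma (p + 1) * ‖z.re ^ (-(p + 1))‖ := by
        rw [integral_const_mul, integral_rpow_mul_exp_neg_mul_Ioi' hp hz,
          Real.norm_of_nonneg (by positivity), mul_assoc]

theorem isBigO_integral_mul_cexp_neg_mul_of_subset_Ici {g : ℝ → ℂ} {U : Set ℝ} {a δ : ℝ}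
    (hU : MeasurableSet U) (hUδ : U ⊆ Ici δ)
    (hg : IntegrableOn (fun t => ‖g t‖ * Real.exp (-a * t)) U) :
    (fun z : ℂ => ∫ t in U, g t * cexp (-z * t)) =O[comap re atTop]
      fun z => Real.exp (-δ * z.re) := by
  refine .of_bound ((∫ t in U, ‖g t‖ * Real.exp (-a * t)) * Real.exp (δ * a)) ?_
  filter_upwards [tendsto_comap.eventually (eventually_ge_atTop a)] with z (hz : a ≤ z.re)
  calc ‖∫ t in U, g t * cexp (-z * t)‖
      ≤ ∫ t in U, ‖g t‖ * Real.exp (-a * t) * Real.exp (δ * a - δ * z.re) := by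
        refine norm_integral_le_of_norm_le (hg.mul_const _)
          (ae_restrict_of_forall_mem hU fun t ht => ?_)
        have ht : δ ≤ t := hUδ ht
        rw [norm_mul_cexp_neg_mul, mul_assoc, ← Real.exp_add]
        gcongr
        nlinarith
    _ = (∫ t in U, ‖g t‖ * Real.exp (-a * t)) * Real.exp (δ * a) * ‖Real.exp (-δ * z.re)‖ := by
        rw [integral_mul_const, Real.norm_of_nonneg (Real.exp_nonneg _), mul_assoc,
          ← Real.exp_add]
        ring_nf

lemma integral_mul_cexp_neg_mul_sub_gamma_eq {S : Set ℝ} {δ : ℝ} {σ z : ℂ} {φ h : ℝ → ℂ}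
    (hS : MeasurableSet S) (hδ : 0 ≤ δ) (hδS : Icc 0 δ ⊆ S) (hσ : -1 < σ.re) (hz : 0 < z.re)
    (hint : IntegrableOn (fun t => φ t * cexp (-z * t)) S)
    (hφ : ∀ t ∈ Ioc 0 δ, φ t = (t : ℂ) ^ σ * h t) :
    (∫ t in S, φ t * cexp (-z * t)) - h 0 * Gamma (σ + 1) * z ^ (-σ - 1) =
      (∫ t in Ioc 0 δ, (t : ℂ) ^ σ * (h t - h 0) * cexp (-z * t))
        + (∫ t in S \ Icc 0 δ, φ t * cexp (-z * t))
        - ∫ t in Ioi δ, h 0 * (t : ℂ) ^ σ * cexp (-z * t) := by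
  have hG := integrableOn_cpow_mul_cexp_neg_mul_Ioi hσ hz
  have hsplitS : ∫ t in S, φ t * cexp (-z * t) =
      (∫ t in Ioc 0 δ, φ t * cexp (-z * t)) + ∫ t in S \ Icc 0 δ, φ t * cexp (-z * t) := by
    rw [← integral_Icc_eq_integral_Ioc, ← setIntegral_union disjoint_sdiff_right
      (hS.diff measurableSet_Icc) (hint.mono_set hδS) (hint.mono_set sdiff_subset),
      union_sdiff_cancel hδS]
  have hsplitG : ∫ t in Ioi (0 : ℝ), (t : ℂ) ^ σ * cexp (-z * t) =
      (∫ t in Ioc 0 δ, (t : ℂ) ^ σ * cexp (-z * t))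
        + ∫ t in Ioi δ, (t : ℂ) ^ σ * cexp (-z * t) := by
    rw [← setIntegral_union (Ioc_disjoint_Ioi le_rfl) measurableSet_Ioi
      (hG.mono_set Ioc_subset_Ioi_self) (hG.mono_set (Ioi_subset_Ioi hδ)),
      Ioc_union_Ioi_eq_Ioi hδ]
  have hhead : ∫ t in Ioc 0 δ, (t : ℂ) ^ σ * (h t - h 0) * cexp (-z * t) =
      (∫ t in Ioc 0 δ, φ t * cexp (-z * t))
        - h 0 * ∫ t in Ioc 0 δ, (t : ℂ) ^ σ * cexp (-z * t) := by
    rw [← integral_const_mul, ← integral_sub (hint.mono_set (Ioc_subset_Icc_self.trans hδS))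
      ((hG.mono_set Ioc_subset_Ioi_self).const_mul _)]
    refine setIntegral_congr_fun measurableSet_Ioc fun t ht => ?_
    simp only [hφ t ht]
    ring
  rw [mul_assoc, ← integral_cpow_mul_cexp_neg_mul_Ioi hσ hz, hsplitS, hhead, hsplitG]
  simp only [mul_assoc, integral_const_mul]
  ring

theorem isBigO_integral_mul_cexp_neg_mul_sub_gamma {S : Set ℝ} {δ M : ℝ} {σ : ℂ} {φ h : ℝ → ℂ}
    (hS : MeasurableSet S) (hS0 : S ⊆ Ici 0) (hδ : 0 < δ) (hδS : Icc 0 δ ⊆ S) (hσ : -1 < σ.re)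
    (hint : IntegrableOn φ S) (hφ : ∀ t ∈ Ioc 0 δ, φ t = (t : ℂ) ^ σ * h t)
    (hh : ∀ t ∈ Ioc 0 δ, ‖h t - h 0‖ ≤ M * t) :
    (fun z : ℂ => (∫ t in S, φ t * cexp (-z * t)) - h 0 * Gamma (σ + 1) * z ^ (-σ - 1))
      =O[comap re atTop] fun z => z.re ^ (-(σ.re + 2)) := by
  have hsplit : ∀ᶠ z : ℂ in comap re atTop,
      (∫ t in S, φ t * cexp (-z * t)) - h 0 * Gamma (σ + 1) * z ^ (-σ - 1) =
        (∫ t in Ioc 0 δ, (t : ℂ) ^ σ * (h t - h 0) * cexp (-z * t))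
          + (∫ t in S \ Icc 0 δ, φ t * cexp (-z * t))
          - ∫ t in Ioi δ, h 0 * (t : ℂ) ^ σ * cexp (-z * t) := by
    filter_upwards [tendsto_comap.eventually (eventually_gt_atTop 0)] with z hz
    exact integral_mul_cexp_neg_mul_sub_gamma_eq hS hδ.le hδS hσ hz
      (hint.mul_cexp_neg_mul hS hS0 hz.le) hφ
  have hhead : (fun z : ℂ => ∫ t in Ioc 0 δ, (t : ℂ) ^ σ * (h t - h 0) * cexp (-z * t))
      =O[comap re atTop] fun z => z.re ^ (-(σ.re + 2)) := by
    rw [← one_add_one_eq_two, ← add_assoc]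
    refine isBigO_integral_Ioc_mul_cexp_neg_mul (M := M) (by linarith) fun t ht => ?_
    rw [norm_mul, norm_cpow_eq_rpow_re_of_pos ht.1, Real.rpow_add_one ht.1.ne']
    calc t ^ σ.re * ‖h t - h 0‖ ≤ t ^ σ.re * (M * t) :=
          mul_le_mul_of_nonneg_left (hh t ht) (Real.rpow_nonneg ht.1.le _)
      _ = M * (t ^ σ.re * t) := by ring
  have htail : (fun z : ℂ => ∫ t in S \ Icc 0 δ, φ t * cexp (-z * t))
      =O[comap re atTop] fun z => Real.exp (-δ * z.re) :=
    isBigO_integral_mul_cexp_neg_mul_of_subset_Ici (a := 0) (hS.diff measurableSet_Icc)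
      (fun t ht => le_of_lt (not_le.1 fun htδ => ht.2 ⟨hS0 ht.1, htδ⟩))
      (by simpa using IntegrableOn.mono_set (μ := volume) hint.norm sdiff_subset)
  have hgamma_tail : (fun z : ℂ => ∫ t in Ioi δ, h 0 * (t : ℂ) ^ σ * cexp (-z * t))
      =O[comap re atTop] fun z => Real.exp (-δ * z.re) := by
    refine isBigO_integral_mul_cexp_neg_mul_of_subset_Ici (a := 1) measurableSet_Ioi
      Ioi_subset_Ici_self ?_
    have : IntegrableOn (fun t => ‖h 0‖ * (t ^ σ.re * Real.exp (-1 * t))) (Ioi 0) :=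
      (integrableOn_rpow_mul_exp_neg_mul_Ioi hσ one_pos).const_mul ‖h 0‖
    refine (this.mono_set (Ioi_subset_Ioi hδ.le)).congr_fun (fun t (ht : δ < t) => ?_)
      measurableSet_Ioi
    rw [norm_mul, norm_cpow_eq_rpow_re_of_pos (hδ.trans ht), mul_assoc]
  have hexp : (fun z : ℂ => Real.exp (-δ * z.re)) =O[comap re atTop]
      fun z => z.re ^ (-(σ.re + 2)) :=
    (isLittleO_exp_neg_mul_rpow_atTop hδ _).isBigO.comp_tendsto tendsto_comap
  exact ((hhead.add (htail.trans hexp)).sub (hgamma_tail.trans hexp)).congr'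
    (EventuallyEq.symm hsplit) EventuallyEq.rfl

lemma cos_mul_norm_le_re {θ : ℝ} (hθ : θ ≤ Real.pi) {z : ℂ} (hz : |arg z| ≤ θ) :
    Real.cos θ * ‖z‖ ≤ z.re := by
  rw [← norm_mul_cos_arg, mul_comm, ← Real.cos_abs (arg z)]
  exact mul_le_mul_of_nonneg_left
    (Real.cos_le_cos_of_nonneg_of_le_pi (abs_nonneg _) hθ hz) (norm_nonneg _)

lemma tendsto_re_comap_norm_atTop_inf_sector {θ : ℝ} (hθ₀ : 0 ≤ θ) (hθ : θ < Real.pi / 2) :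
    Tendsto re (comap (‖·‖) atTop ⊓ 𝓟 {z : ℂ | |arg z| ≤ θ}) atTop := by
  have hcos : 0 < Real.cos θ := Real.cos_pos_of_mem_Ioo ⟨by linarith [Real.pi_pos], hθ⟩
  refine tendsto_atTop_mono' _ ?_
    ((tendsto_comap.mono_left inf_le_left).const_mul_atTop hcos)
  exact eventually_inf_principal.2 (.of_forall fun z hz =>
    cos_mul_norm_le_re (by linarith [Real.pi_pos]) hz)

lemma isBigO_re_rpow_norm_rpow_sector {θ s : ℝ} (hθ₀ : 0 ≤ θ) (hθ : θ < Real.pi / 2)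
    (hs : 0 ≤ s) :
    (fun z : ℂ => z.re ^ (-s)) =O[comap (‖·‖) atTop ⊓ 𝓟 {z : ℂ | |arg z| ≤ θ}]
      fun z => ‖z‖ ^ (-s) := by
  have hcos : 0 < Real.cos θ := Real.cos_pos_of_mem_Ioo ⟨by linarith [Real.pi_pos], hθ⟩
  refine .of_bound (Real.cos θ ^ (-s)) ?_
  have hnorm : ∀ᶠ z : ℂ in comap (‖·‖) atTop ⊓ 𝓟 {z : ℂ | |arg z| ≤ θ}, 0 < ‖z‖ :=
    (tendsto_comap.eventually (eventually_gt_atTop 0)).filter_mono inf_le_left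
  filter_upwards [hnorm, inf_le_right (α := Filter ℂ) (mem_principal_self _)] with z hz harg
  have hre := cos_mul_norm_le_re (by linarith [Real.pi_pos]) harg
  rw [Real.norm_of_nonneg (Real.rpow_nonneg ((mul_pos hcos hz).le.trans hre) _),
    Real.norm_of_nonneg (Real.rpow_nonneg hz.le _), ← Real.mul_rpow hcos.le hz.le]
  exact Real.rpow_le_rpow_of_nonpos (by positivity) hre (neg_nonpos.2 hs)

lemma exists_Icc_subset_setOf_ofReal_le {T : ENNReal} (hT : 0 < T) {δ : ℝ} (hδ : 0 < δ) :
    ∃ δ' ∈ Ioc 0 δ, Icc 0 δ' ⊆ {t : ℝ | 0 ≤ t ∧ ENNReal.ofReal t ≤ T} := by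
  obtain ⟨r, -, hr, hrT⟩ := ENNReal.lt_iff_exists_real_btwn.1 hT
  refine ⟨min δ r, ⟨lt_min hδ (ENNReal.ofReal_pos.1 hr), min_le_left _ _⟩,
    fun t ht => ⟨ht.1, ?_⟩⟩
  exact (ENNReal.ofReal_le_ofReal (ht.2.trans (min_le_right _ _))).trans hrT.le

theorem watson_lemma_general
    (T : ENNReal) (hT : 0 < T)
    (S : Set ℝ) (hS : S = {t : ℝ | 0 ≤ t ∧ (ENNReal.ofReal t) ≤ T})
    (σ : ℂ) (hσ : -1 < σ.re)
    (φ h : ℝ → ℂ)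
    (hint : IntegrableOn φ S volume)
    (hφ : ∀ t ∈ S, φ t = ((t : ℝ) : ℂ) ^ σ * h t)
    (hh : ∃ δ > (0 : ℝ), (∀ t ∈ Set.Icc (0 : ℝ) δ, DifferentiableAt ℝ h t) ∧
          ∃ M : ℝ, ∀ t ∈ Set.Icc (0 : ℝ) δ, ‖deriv h t‖ ≤ M)
    (θ : ℝ) (hθ₀ : 0 ≤ θ) (hθ : θ < Real.pi / 2) :
    (∀ lam : ℂ, 0 < lam.re →
        IntegrableOn (fun t : ℝ => φ t * Complex.exp (-lam * t)) S volume) ∧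
    (fun lam : ℂ =>
        (∫ t in S, φ t * Complex.exp (-lam * t)) -
          h 0 * Complex.Gamma (σ + 1) * lam ^ (-σ - 1))
      =O[comap (fun z : ℂ => ‖z‖) atTop ⊓ 𝓟 {lam : ℂ | |Complex.arg lam| ≤ θ}]
      (fun lam : ℂ => lam ^ (-σ - 2)) := by
  obtain ⟨δ, hδ, hdiff, M, hM⟩ := hh
  have hSm : MeasurableSet S :=
    hS ▸ measurableSet_Ici.inter (measurableSet_le ENNReal.measurable_ofReal measurable_const)
  have hS0 : S ⊆ Ici 0 := hS ▸ fun t ht => ht.1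
  refine ⟨fun lam hlam => hint.mul_cexp_neg_mul hSm hS0 hlam.le, ?_⟩
  obtain ⟨δ', ⟨hδ', hδ'δ⟩, hδ'S⟩ := exists_Icc_subset_setOf_ofReal_le hT hδ
  rw [← hS] at hδ'S
  have hlip : ∀ t ∈ Ioc 0 δ', ‖h t - h 0‖ ≤ M * t := fun t ht => by
    simpa [Real.norm_eq_abs, abs_of_pos ht.1] using
      (convex_Icc 0 δ).norm_image_sub_le_of_norm_deriv_le hdiff hM ⟨le_rfl, hδ.le⟩
        ⟨ht.1.le, ht.2.trans hδ'δ⟩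
  have hre : (-σ - 2).re = -(σ.re + 2) := by
    simp only [sub_re, neg_re, re_ofNat]; ring
  have hpow : (fun z : ℂ => ‖z‖ ^ (-(σ.re + 2)))
      =Θ[comap (‖·‖) atTop ⊓ 𝓟 {z : ℂ | |arg z| ≤ θ}] fun z => z ^ (-σ - 2) :=
    hre ▸ (isTheta_cpow_const_rpow fun hb => by linarith).symm
  exact ((isBigO_integral_mul_cexp_neg_mul_sub_gamma hSm hS0 hδ' hδ'S hσ hint
      (fun t ht => hφ t (hδ'S (Ioc_subset_Icc_self ht))) hlip).mono
    ((tendsto_re_comap_norm_atTop_inf_sector hθ₀ hθ).le_comap)).trans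
    ((isBigO_re_rpow_norm_rpow_sector hθ₀ hθ (by linarith)).trans_isTheta hpow)

/-- Watson's lemma: `Φ(λ) = ∫_{S} φ(t) e^{-λt} dt` over `S = {t : 0 ≤ t, t ≤ T}`
(with `0 < T ≤ ∞`) is finite for `Re λ > 0` and satisfies
`Φ(λ) = h(0)Γ(σ+1)λ^{-σ-1} + O(λ^{-σ-2})` in the sector `|arg λ| ≤ θ`. -/
theorem watson_lemma
    (T : ENNReal) (hT : 0 < T)
    (S : Set ℝ) (hS : S = {t : ℝ | 0 ≤ t ∧ (ENNReal.ofReal t) ≤ T})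
    (σ : ℂ) (hσ : -1 < σ.re)
    (φ h : ℝ → ℂ)
    (hint : IntegrableOn φ S volume)
    (hφ : ∀ t ∈ S, φ t = ((t : ℝ) : ℂ) ^ σ * h t)
    (hh0 : h 0 ≠ 0)
    (hh : ∃ δ > (0 : ℝ), (∀ t ∈ Set.Icc (0 : ℝ) δ, DifferentiableAt ℝ h t) ∧
          ∃ M : ℝ, ∀ t ∈ Set.Icc (0 : ℝ) δ, ‖deriv h t‖ ≤ M)
    (θ : ℝ) (hθ₀ : 0 ≤ θ) (hθ : θ < Real.pi / 2) :
    (∀ lam : ℂ, 0 < lam.re →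
        IntegrableOn (fun t : ℝ => φ t * Complex.exp (-lam * t)) S volume) ∧
    (fun lam : ℂ =>
        (∫ t in S, φ t * Complex.exp (-lam * t)) -
          h 0 * Complex.Gamma (σ + 1) * lam ^ (-σ - 1))
      =O[comap (fun z : ℂ => ‖z‖) atTop ⊓ 𝓟 {lam : ℂ | |Complex.arg lam| ≤ θ}]
      (fun lam : ℂ => lam ^ (-σ - 2)) :=
  watson_lemma_general T hT S hS σ hσ φ h hint hφ hh θ hθ₀ hθ
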